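/- Let M be a weak V-module and n ≥ 0. Then Ω_n(M) = {w ∈ M : u_m w = 0 for all homogeneous u ∈ V and m > wt u - 1 + n} is a module for the associative algebra A_n(V), with v + O_n(V) acting as o(v) = v_{wt v - 1}. -/

import Mathlib

/-- Generalized binomial coefficient `C(n, k)` for `n : ℤ`, valued in `ℂ`. -/
noncomputable def cbinom (n : ℤ) (k : ℕ) : ℂ :=
  (∏ i ∈ Finset.range k, ((n : ℂ) - (i : ℂ))) / (Nat.factorial k : ℂ)

/-- A vertex operator algebra structure on a complex vector space `V`. -/
structure VOA (V : Type) [AddCommGroup V] [Module ℂ V] where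
  mode : V → ℤ → Module.End ℂ V
  vacuum : V
  conformal : V
  grading : ℤ → Submodule ℂ V
  internal : Function.Bijective (DirectSum.coeLinearMap grading)
  mode_add : ∀ (u v : V) (n : ℤ), mode (u + v) n = mode u n + mode v n
  mode_smul : ∀ (c : ℂ) (u : V) (n : ℤ), mode (c • u) n = c • mode u n
  truncation : ∀ u v : V, ∃ N : ℤ, ∀ n : ℤ, N ≤ n → mode u n v = 0
  vacuum_mem : vacuum ∈ grading 0
  conformal_mem : conformal ∈ grading 2
  vacuum_mode : ∀ (v : V) (n : ℤ), mode vacuum n v = if n = -1 then v else 0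
  creation : ∀ (u : V) (n : ℤ), 0 ≤ n → mode u n vacuum = 0
  creation_neg_one : ∀ u : V, mode u (-1) vacuum = u
  L0_eigen : ∀ (n : ℤ) (u : V), u ∈ grading n → mode conformal 1 u = (n : ℂ) • u
  Lneg1_deriv : ∀ (u : V) (n : ℤ), mode (mode conformal 0 u) n = (-n : ℂ) • mode u (n - 1)
  grading_mode : ∀ (r s m : ℤ) (u v : V), u ∈ grading r → v ∈ grading s →
    mode u m v ∈ grading (r + s - m - 1)
  bounded_below : ∃ N : ℤ, ∀ n : ℤ, n < N → grading n = ⊥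
  fin_dim : ∀ n : ℤ, FiniteDimensional ℂ (grading n)
  borcherds : ∀ (p q r : ℤ) (u v w : V),
    (∑ᶠ i : ℕ, cbinom p i • mode (mode u (r + i) v) (p + q - i) w) =
    ∑ᶠ i : ℕ, ((-1 : ℂ) ^ i * cbinom r i) •
      (mode u (p + r - i) (mode v (q + i) w)
        - (-1 : ℂ) ^ r • mode v (q + r - i) (mode u (p + i) w))

variable {V : Type} [AddCommGroup V] [Module ℂ V]

/-- Projection onto the weight-`n` subspace. -/
noncomputable def VOA.proj (d : VOA V) (n : ℤ) : V →ₗ[ℂ] V :=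
  (d.grading n).subtype ∘ₗ (DirectSum.component ℂ ℤ (fun m => d.grading m) n) ∘ₗ
    (LinearEquiv.ofBijective (DirectSum.coeLinearMap d.grading) d.internal).symm.toLinearMap

/-- `Res_z (1+z)^N z^{-k} Y(u,z)v` for a vector `u` regarded as having weight contribution `N`. -/
noncomputable def VOA.hres (d : VOA V) (N k : ℤ) (u v : V) : V :=
  ∑ᶠ i : ℕ, cbinom N i • d.mode u ((i : ℤ) - k) v

/-- `Res_z (1+z)^{wt u + m} z^{-k} Y(u,z)v`, extended bilinearly from homogeneous `u`. -/
noncomputable def VOA.bres (d : VOA V) (m k : ℤ) (u v : V) : V :=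
  ∑ᶠ n : ℤ, d.hres (n + m) k (d.proj n u) v

/-- The Zhu product `u * v`. -/
noncomputable def VOA.star (d : VOA V) (u v : V) : V := d.bres 0 1 u v

/-- The Zhu circle product `u ∘ v`. -/
noncomputable def VOA.circ (d : VOA V) (u v : V) : V := d.bres 0 2 u v

/-- The subspace `O(V)` spanned by all `u ∘ v`. -/
def VOA.Ozhu (d : VOA V) : Submodule ℂ V := Submodule.span ℂ {w : V | ∃ u v : V, w = d.circ u v}

/-- The product `u ∘_n v`. -/
noncomputable def VOA.circn (d : VOA V) (n : ℕ) (u v : V) : V := d.bres n (2 * n + 2) u v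

/-- The product `u *_n v` of Dong–Li–Mason. -/
noncomputable def VOA.starn (d : VOA V) (n : ℕ) (u v : V) : V :=
  ∑ m ∈ Finset.range (n + 1),
    ((-1 : ℂ) ^ m * cbinom ((m : ℤ) + (n : ℤ)) n) • d.bres n ((n : ℤ) + (m : ℤ) + 1) u v

/-- The subspace `O_n(V)`. -/
def VOA.On (d : VOA V) (n : ℕ) : Submodule ℂ V :=
  Submodule.span ℂ ({w : V | ∃ u v : V, w = d.circn n u v} ∪
    {w : V | ∃ u : V, w = d.mode d.conformal 0 u + d.mode d.conformal 1 u})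

/-- The Dong–Jiang product `u *_{m,p}^n v`. -/
noncomputable def VOA.starmpn (d : VOA V) (m p n : ℕ) (u v : V) : V :=
  ∑ i ∈ Finset.range (p + 1),
    ((-1 : ℂ) ^ i * cbinom ((m : ℤ) + (n : ℤ) - (p : ℤ) + (i : ℤ)) i) •
      d.bres m ((m : ℤ) + (n : ℤ) - (p : ℤ) + (i : ℤ) + 1) u v

/-- The Dong–Jiang product `u ∘_m^n v`. -/
noncomputable def VOA.circmn (d : VOA V) (n m : ℕ) (u v : V) : V :=
  d.bres m ((n : ℤ) + (m : ℤ) + 2) u v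

/-- The subspace `O_{n,m}(V) = O'_{n,m}(V) + O''_{n,m}(V) + O'''_{n,m}(V)` of Dong–Jiang. -/
def VOA.Onm (d : VOA V) (n m : ℕ) : Submodule ℂ V :=
  Submodule.span ℂ (
    {w : V | ∃ u v : V, w = d.circmn n m u v} ∪
    {w : V | ∃ u : V, w = d.mode d.conformal 0 u + d.mode d.conformal 1 u
        + (((m : ℂ) - (n : ℂ)) • u)} ∪
    {w : V | ∃ (u a b c : V) (p₁ p₂ p₃ : ℕ), w = d.starmpn m p₃ n u
        (d.starmpn m p₁ p₃ (d.starmpn p₁ p₂ p₃ a b) c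
          - d.starmpn m p₂ p₃ a (d.starmpn m p₁ p₂ b c))} ∪
    {w : V | ∃ (p : ℕ) (u x v : V), x ∈ d.On p ∧ w = d.starmpn m p n (d.starmpn p p n u x) v})

/-- The subspace `C_2(V)` spanned by the `u_{-2} v`. -/
def VOA.C2 (d : VOA V) : Submodule ℂ V := Submodule.span ℂ {w : V | ∃ u v : V, w = d.mode u (-2) v}

/-- `V` is a simple vertex operator algebra: its only ideals are `0` and `V`. -/
def VOA.IsSimpleVOA (d : VOA V) : Prop :=
  (∃ v : V, v ≠ 0) ∧ ∀ P : Submodule ℂ V,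
    (∀ (u : V) (n : ℤ), ∀ w ∈ P, d.mode u n w ∈ P) → P = ⊥ ∨ P = ⊤

/-- A weak module for the vertex operator algebra `d`. -/
structure WeakMod (d : VOA V) (M : Type) [AddCommGroup M] [Module ℂ M] where
  act : V → ℤ → Module.End ℂ M
  act_add : ∀ (u v : V) (n : ℤ), act (u + v) n = act u n + act v n
  act_smul : ∀ (c : ℂ) (u : V) (n : ℤ), act (c • u) n = c • act u n
  truncation : ∀ (u : V) (w : M), ∃ N : ℤ, ∀ n : ℤ, N ≤ n → act u n w = 0
  vacuum_act : ∀ (w : M) (n : ℤ), act d.vacuum n w = if n = -1 then w else 0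
  borcherds : ∀ (p q r : ℤ) (u v : V) (w : M),
    (∑ᶠ i : ℕ, cbinom p i • act (d.mode u (r + i) v) (p + q - i) w) =
    ∑ᶠ i : ℕ, ((-1 : ℂ) ^ i * cbinom r i) •
      (act u (p + r - i) (act v (q + i) w)
        - (-1 : ℂ) ^ r • act v (q + r - i) (act u (p + i) w))

/-- An admissible (ℤ₊-graded) module for the vertex operator algebra `d`. -/
structure AdmMod (d : VOA V) (M : Type) [AddCommGroup M] [Module ℂ M]
    extends WeakMod d M where
  gr : ℤ → Submodule ℂ M
  gr_internal : Function.Bijective (DirectSum.coeLinearMap gr)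
  gr_neg : ∀ n : ℤ, n < 0 → gr n = ⊥
  gr_act : ∀ (r : ℤ) (u : V), u ∈ d.grading r → ∀ (m n : ℤ) (w : M), w ∈ gr n →
    act u m w ∈ gr (r + n - m - 1)

variable {M : Type} [AddCommGroup M] [Module ℂ M]

/-- The zero-mode `o(v) = v_{wt v - 1}`, extended linearly from homogeneous `v`. -/
noncomputable def WeakMod.o {d : VOA V} (W : WeakMod d M) (v : V) (w : M) : M :=
  ∑ᶠ r : ℤ, W.act (d.proj r v) (r - 1) w

/-- The mode `o_t(v) = v_{wt v - 1 - t}`, extended linearly from homogeneous `v`. -/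
noncomputable def WeakMod.ot {d : VOA V} (W : WeakMod d M) (t : ℤ) (v : V) (w : M) : M :=
  ∑ᶠ r : ℤ, W.act (d.proj r v) (r - 1 - t) w

/-- The subspace `Ω_n(M)` of a weak module. -/
def WeakMod.OmegaSet {d : VOA V} (W : WeakMod d M) (n : ℕ) : Set M :=
  {w : M | ∀ (r : ℤ) (u : V), u ∈ d.grading r → ∀ m : ℤ, m > r - 1 + (n : ℤ) → W.act u m w = 0}

/-- A subspace stable under all modes. -/
def WeakMod.IsStable {d : VOA V} (W : WeakMod d M) (P : Submodule ℂ M) : Prop :=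
  ∀ (u : V) (n : ℤ), ∀ w ∈ P, W.act u n w ∈ P

/-- A subspace compatible with the grading of an admissible module. -/
def AdmMod.IsGraded {d : VOA V} (A : AdmMod d M) (P : Submodule ℂ M) : Prop :=
  P = ⨆ n : ℤ, (P ⊓ A.gr n)

/-- `P` is an irreducible admissible submodule. -/
def AdmMod.IrredSub {d : VOA V} (A : AdmMod d M) (P : Submodule ℂ M) : Prop :=
  P ≠ ⊥ ∧ A.toWeakMod.IsStable P ∧ A.IsGraded P ∧
    ∀ Q : Submodule ℂ M, Q ≤ P → A.toWeakMod.IsStable Q → A.IsGraded Q → Q = ⊥ ∨ Q = P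

/-- The admissible module is irreducible. -/
def AdmMod.IsIrreducible {d : VOA V} (A : AdmMod d M) : Prop :=
  (∃ w : M, w ≠ 0) ∧
    ∀ P : Submodule ℂ M, A.toWeakMod.IsStable P → A.IsGraded P → P = ⊥ ∨ P = ⊤

/-- Rationality: every admissible module is a direct sum of irreducible admissible submodules. -/
def Rational (d : VOA V) : Prop :=
  ∀ (M : Type) [AddCommGroup M] [Module ℂ M] (A : AdmMod d M),
    ∃ (ι : Type) (f : ι → Submodule ℂ M),
      (∀ i, A.IrredSub (f i)) ∧ iSupIndep f ∧ (⨆ i, f i) = ⊤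

/-- Equivalence of admissible modules. -/
def AdmEquiv {d : VOA V} {M₁ M₂ : Type} [AddCommGroup M₁] [Module ℂ M₁]
    [AddCommGroup M₂] [Module ℂ M₂] (A₁ : AdmMod d M₁) (A₂ : AdmMod d M₂) : Prop :=
  ∃ e : M₁ ≃ₗ[ℂ] M₂, ∀ (u : V) (n : ℤ) (w : M₁), e (A₁.act u n w) = A₂.act u n (e w)

/-- An ordinary-module structure on a weak module: a `ℂ`-grading by finite dimensional
`L(0)`-eigenspaces, bounded below in each coset of `ℤ`. -/
structure OrdinaryStruct {d : VOA V} (W : WeakMod d M) where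
  grc : ℂ → Submodule ℂ M
  internal : Function.Bijective (DirectSum.coeLinearMap grc)
  eigen : ∀ (lam : ℂ) (w : M), w ∈ grc lam → W.act d.conformal 1 w = lam • w
  findim : ∀ lam : ℂ, FiniteDimensional ℂ (grc lam)
  bounded : ∀ lam : ℂ, ∃ N : ℤ, ∀ n : ℤ, n < N → grc (lam + (n : ℂ)) = ⊥

/-- An admissible module is ordinary. -/
def AdmMod.IsOrdinary {d : VOA V} (A : AdmMod d M) : Prop :=
  Nonempty (OrdinaryStruct A.toWeakMod)

/-- A realization of the quotient associative algebra `V/Osub` with product induced by `mu`. -/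
structure Realization (Osub : Submodule ℂ V) (mu : V → V → V) (one : V) where
  carrier : Type
  [ring : Ring carrier]
  [alg : Algebra ℂ carrier]
  emb : V →ₗ[ℂ] carrier
  surj : Function.Surjective emb
  ker_eq : LinearMap.ker emb = Osub
  mul_compat : ∀ u v : V, emb (mu u v) = emb u * emb v
  one_compat : emb one = 1

/-- The realized algebra is semisimple. -/
def Realization.Semisimple {Osub : Submodule ℂ V} {mu : V → V → V} {one : V}
    (R : Realization Osub mu one) : Prop :=
  letI := R.ring; IsSemisimpleRing R.carrier

/-- The realized algebra is finite dimensional over `ℂ`. -/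
def Realization.FinDim {Osub : Submodule ℂ V} {mu : V → V → V} {one : V}
    (R : Realization Osub mu one) : Prop :=
  letI := R.ring; letI := R.alg; FiniteDimensional ℂ R.carrier

/-- A module over the quotient algebra `V/Osub`, given as a representation of `V`
killing `Osub` and multiplicative for `mu`. -/
structure RepOf (Osub : Submodule ℂ V) (mu : V → V → V) (one : V)
    (U : Type) [AddCommGroup U] [Module ℂ U] where
  rep : V →ₗ[ℂ] Module.End ℂ U
  kills : ∀ v ∈ Osub, rep v = 0
  mul_compat : ∀ u v : V, rep (mu u v) = rep u * rep v
  one_compat : rep one = 1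

/-- Simplicity of such a representation. -/
def RepOf.IsSimple {Osub : Submodule ℂ V} {mu : V → V → V} {one : V}
    {U : Type} [AddCommGroup U] [Module ℂ U] (Z : RepOf Osub mu one U) : Prop :=
  (∃ u : U, u ≠ 0) ∧
    ∀ P : Submodule ℂ U, (∀ v : V, ∀ x ∈ P, Z.rep v x ∈ P) → P = ⊥ ∨ P = ⊤

/-- Equivalence of two such representations. -/
def RepEquiv {Osub : Submodule ℂ V} {mu : V → V → V} {one : V}
    {U₁ U₂ : Type} [AddCommGroup U₁] [Module ℂ U₁] [AddCommGroup U₂] [Module ℂ U₂]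
    (Z₁ : RepOf Osub mu one U₁) (Z₂ : RepOf Osub mu one U₂) : Prop :=
  ∃ e : U₁ ≃ₗ[ℂ] U₂, ∀ (v : V) (x : U₁), e (Z₁.rep v x) = Z₂.rep v (e x)


section Cbinom

lemma descPoch_eval_int (n : ℤ) (k : ℕ) :
    (((descPochhammer ℤ k).eval n : ℤ) : ℂ) = ∏ i ∈ Finset.range k, ((n : ℂ) - (i : ℂ)) := by
  induction k with
  | zero => simp
  | succ k ih =>
    rw [descPochhammer_succ_eval, Finset.prod_range_succ, ← ih]
    push_cast
    ring

lemma cbinom_eq_choose (n : ℤ) (k : ℕ) :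
    cbinom n k = ((Ring.choose n k : ℤ) : ℂ) := by
  have h := Ring.descPochhammer_eq_factorial_smul_choose (R := ℤ) n k
  rw [← Polynomial.eval_eq_smeval] at h
  rw [cbinom, ← descPoch_eval_int, h]
  push_cast [nsmul_eq_mul]
  rw [mul_comm, mul_div_assoc, div_self (by exact_mod_cast Nat.factorial_ne_zero k), mul_one]

lemma cbinom_natCast (n k : ℕ) : cbinom (n : ℤ) k = (n.choose k : ℂ) := by
  rw [cbinom_eq_choose, Ring.choose_natCast]; norm_cast

lemma cbinom_zero (n : ℤ) : cbinom n 0 = 1 := by simp [cbinom]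

lemma cbinom_zero_succ (k : ℕ) : cbinom 0 (k + 1) = 0 := by
  rw [cbinom]
  rw [Finset.prod_eq_zero (Finset.mem_range.2 (Nat.succ_pos k)) (by simp)]
  simp

lemma cbinom_nat_eq_zero {n k : ℕ} (h : n < k) : cbinom (n : ℤ) k = 0 := by
  rw [cbinom_natCast, Nat.choose_eq_zero_of_lt h]; simp

lemma cbinom_neg (k i : ℕ) :
    cbinom (-(k : ℤ) - 1) i = (-1 : ℂ) ^ i * ((k + i).choose i : ℂ) := by
  rw [cbinom]
  have hp : ∏ j ∈ Finset.range i, (((-(k : ℤ) - 1 : ℤ) : ℂ) - (j : ℂ))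
      = (-1 : ℂ) ^ i * ((k + i).factorial / k.factorial : ℂ) := by
    induction i with
    | zero =>
      have hk : (k.factorial : ℂ) ≠ 0 := by exact_mod_cast Nat.factorial_ne_zero k
      simp [div_self hk]
    | succ i ih =>
      rw [Finset.prod_range_succ, ih]
      have h2 : ((k + (i+1)).factorial : ℂ) = ((k + i).factorial : ℂ) * ((k : ℂ) + (i : ℂ) + 1) := by
        have : k + (i + 1) = (k + i) + 1 := by ring
        rw [this, Nat.factorial_succ]
        push_cast
        ring
      rw [h2]
      have hk : (k.factorial : ℂ) ≠ 0 := by exact_mod_cast Nat.factorial_ne_zero k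
      push_cast
      field_simp
      ring
  rw [hp]
  have hk : (k.factorial : ℂ) ≠ 0 := by exact_mod_cast Nat.factorial_ne_zero k
  have hi : (i.factorial : ℂ) ≠ 0 := by exact_mod_cast Nat.factorial_ne_zero i
  have hc : ((k + i).choose i : ℂ) = ((k + i).factorial : ℂ) / ((k.factorial : ℂ) * (i.factorial : ℂ)) := by
    have h3 := Nat.add_choose_mul_factorial_mul_factorial k i
    have h4 : (k + i).choose i * (k.factorial * i.factorial) = (k + i).factorial := by
      rw [← h3]; ring
    field_simp
    exact_mod_cast (mul_assoc _ _ _).trans h4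
  rw [hc]
  field_simp

lemma ringChoose_neg (k i : ℕ) :
    (Ring.choose (-(k : ℤ) - 1) i : ℤ) = (-1 : ℤ) ^ i * ((k + i).choose i : ℤ) := by
  have := cbinom_neg k i
  rw [cbinom_eq_choose] at this
  exact_mod_cast this

lemma key_vandermonde (n j : ℕ) (hj : 1 ≤ j) :
    ∑ m ∈ Finset.range (j + 1),
      (-1 : ℂ) ^ m * ((n + m).choose m : ℂ) * ((n + j).choose (j - m) : ℂ) = 0 := by
  have hmain := Ring.add_choose_eq (R := ℤ) (r := -(n : ℤ) - 1) (s := ((n + j : ℕ) : ℤ)) j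
    (Commute.all _ _)
  have hsum : (-(n : ℤ) - 1) + ((n + j : ℕ) : ℤ) = ((j - 1 : ℕ) : ℤ) := by
    push_cast [Nat.cast_sub hj]
    ring
  rw [hsum, Ring.choose_natCast, Nat.choose_eq_zero_of_lt (by omega)] at hmain
  have hmain2 : (∑ m ∈ Finset.range (j + 1),
      Ring.choose (-(n : ℤ) - 1) m * Ring.choose ((n + j : ℕ) : ℤ) (j - m)) = 0 := by
    rw [← Finset.Nat.sum_antidiagonal_eq_sum_range_succ_mk
      (fun p => Ring.choose (-(n : ℤ) - 1) p.1 * Ring.choose ((n + j : ℕ) : ℤ) p.2), ← hmain]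
    simp
  have hz : (∑ m ∈ Finset.range (j + 1),
      (-1 : ℤ) ^ m * ((n + m).choose m : ℤ) * ((n + j).choose (j - m) : ℤ)) = 0 := by
    rw [← hmain2]
    refine Finset.sum_congr rfl fun m hm => ?_
    rw [ringChoose_neg, Ring.choose_natCast]
  calc ∑ m ∈ Finset.range (j + 1),
      (-1 : ℂ) ^ m * ((n + m).choose m : ℂ) * ((n + j).choose (j - m) : ℂ)
      = ((∑ m ∈ Finset.range (j + 1),
      (-1 : ℤ) ^ m * ((n + m).choose m : ℤ) * ((n + j).choose (j - m) : ℤ) : ℤ) : ℂ) := by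
        push_cast
        rfl
    _ = 0 := by rw [hz]; simp

end Cbinom

section Aux

namespace VOA

variable (d : VOA V)

lemma proj_apply (v : V) (r : ℤ) :
    d.proj r v =
      ((((LinearEquiv.ofBijective (DirectSum.coeLinearMap d.grading) d.internal).symm v) r : V)) :=
  rfl

lemma symm_eq_of {r : ℤ} {v : V} (h : v ∈ d.grading r) :
    (LinearEquiv.ofBijective (DirectSum.coeLinearMap d.grading) d.internal).symm v
      = DirectSum.of (fun i => ↥(d.grading i)) r ⟨v, h⟩ := by
  rw [LinearEquiv.symm_apply_eq, LinearEquiv.ofBijective_apply, DirectSum.coeLinearMap_of]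

lemma proj_mem (r : ℤ) (v : V) : d.proj r v ∈ d.grading r := by
  rw [proj_apply]; exact Submodule.coe_mem _

lemma proj_of_mem {r : ℤ} {v : V} (h : v ∈ d.grading r) : d.proj r v = v := by
  rw [proj_apply, symm_eq_of d h, DirectSum.of_eq_same]

lemma proj_of_mem_ne {r s : ℤ} {v : V} (h : v ∈ d.grading r) (hne : s ≠ r) :
    d.proj s v = 0 := by
  rw [proj_apply, symm_eq_of d h, DirectSum.of_eq_of_ne _ _ _ hne]
  rfl

lemma proj_support_finite (v : V) :
    (Function.support fun r => d.proj r v).Finite := by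
  classical
  apply Set.Finite.subset
    (Set.finite_coe_iff.mp (inferInstance : Finite
      ((((LinearEquiv.ofBijective (DirectSum.coeLinearMap d.grading) d.internal).symm v).support : Finset ℤ) : Set ℤ)))
  intro r hr
  simp only [Function.mem_support] at hr
  simp only [Finset.coe_sort_coe, Finset.mem_coe, DFinsupp.mem_support_iff]
  intro h0
  apply hr
  rw [proj_apply, h0]
  rfl

lemma finsum_proj (v : V) : ∑ᶠ r, d.proj r v = v := by
  classical
  have hsupp : (Function.support fun r => d.proj r v) ⊆
      ((((LinearEquiv.ofBijective (DirectSum.coeLinearMap d.grading) d.internal).symm v).support : Finset ℤ) : Set ℤ) := by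
    intro r hr
    simp only [Function.mem_support] at hr
    simp only [Finset.coe_sort_coe, Finset.mem_coe, DFinsupp.mem_support_iff]
    intro h0
    apply hr
    rw [proj_apply, h0]
    rfl
  rw [finsum_eq_finset_sum_of_support_subset _ hsupp]
  set x := (LinearEquiv.ofBijective (DirectSum.coeLinearMap d.grading) d.internal).symm v with hx
  have hv : v = DirectSum.coeLinearMap d.grading x := by
    rw [hx]
    exact ((LinearEquiv.ofBijective (DirectSum.coeLinearMap d.grading) d.internal).apply_symm_apply v).symm
  calc ∑ r ∈ x.support, d.proj r v = ∑ r ∈ x.support, ((x r : V)) :=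
        Finset.sum_congr rfl fun r _ => by rw [proj_apply]
    _ = v := by
        rw [hv]
        conv_rhs => rw [← DirectSum.sum_support_of x]
        rw [map_sum]
        exact Finset.sum_congr rfl fun r _ => by rw [DirectSum.coeLinearMap_of]

end VOA

end Aux

section Aux2

namespace VOA

variable (d : VOA V)

lemma mode_zero (k : ℤ) : d.mode 0 k = 0 := by
  have h := d.mode_smul 0 0 k
  simpa using h

lemma hres_support (N k : ℤ) (u v : V) :
    (Function.support fun i : ℕ => cbinom N i • d.mode u ((i : ℤ) - k) v).Finite := by
  obtain ⟨T, hT⟩ := d.truncation u v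
  apply Set.Finite.subset (Set.finite_Iio (T + k).toNat)
  intro i hi
  simp only [Function.mem_support] at hi
  simp only [Set.mem_Iio]
  by_contra hlt
  push_neg at hlt
  apply hi
  rw [hT ((i : ℤ) - k) (by omega)]
  simp

lemma hres_zero_left (N k : ℤ) (v : V) : d.hres N k 0 v = 0 := by
  unfold hres
  rw [finsum_eq_zero_of_forall_eq_zero]
  intro i
  rw [mode_zero]
  simp

lemma hres_add_left (N k : ℤ) (u₁ u₂ v : V) :
    d.hres N k (u₁ + u₂) v = d.hres N k u₁ v + d.hres N k u₂ v := by
  unfold hres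
  rw [← finsum_add_distrib (hres_support d N k u₁ v) (hres_support d N k u₂ v)]
  exact finsum_congr fun i => by rw [d.mode_add]; simp [smul_add]

lemma hres_smul_left (N k : ℤ) (c : ℂ) (u v : V) :
    d.hres N k (c • u) v = c • d.hres N k u v := by
  unfold hres
  rw [smul_finsum]
  exact finsum_congr fun i => by
    rw [d.mode_smul]
    simp [smul_comm (cbinom N i) c]

lemma bres_support (m k : ℤ) (u v : V) :
    (Function.support fun r : ℤ => d.hres ((r : ℤ) + m) k (d.proj r u) v).Finite := by
  apply Set.Finite.subset (d.proj_support_finite u)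
  intro r hr
  simp only [Function.mem_support] at hr ⊢
  intro h0
  apply hr
  rw [h0, hres_zero_left]

lemma bres_zero_left (m k : ℤ) (v : V) : d.bres m k 0 v = 0 := by
  unfold bres
  rw [finsum_eq_zero_of_forall_eq_zero]
  intro r
  rw [map_zero, hres_zero_left]

lemma bres_add_left (m k : ℤ) (u₁ u₂ v : V) :
    d.bres m k (u₁ + u₂) v = d.bres m k u₁ v + d.bres m k u₂ v := by
  unfold bres
  rw [← finsum_add_distrib (d.bres_support m k u₁ v) (d.bres_support m k u₂ v)]
  exact finsum_congr fun r => by rw [map_add, hres_add_left]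

lemma bres_smul_left (m k : ℤ) (c : ℂ) (u v : V) :
    d.bres m k (c • u) v = c • d.bres m k u v := by
  unfold bres
  rw [smul_finsum]
  exact finsum_congr fun r => by rw [map_smul, hres_smul_left]

lemma bres_homog {s : ℤ} {u : V} (h : u ∈ d.grading s) (m k : ℤ) (v : V) :
    d.bres m k u v = ∑ᶠ i : ℕ, cbinom (s + m) i • d.mode u ((i : ℤ) - k) v := by
  unfold bres
  rw [finsum_eq_single _ s]
  · rw [d.proj_of_mem h]; rfl
  · intro r hr
    rw [d.proj_of_mem_ne h hr, hres_zero_left]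

end VOA

end Aux2

section Aux3

namespace WeakMod

variable {d : VOA V} {M : Type} [AddCommGroup M] [Module ℂ M] (W : WeakMod d M)

lemma act_zero (k : ℤ) : W.act 0 k = 0 := by
  have h := W.act_smul 0 0 k
  simpa using h

lemma o_support (v : V) (w : M) :
    (Function.support fun r : ℤ => W.act (d.proj r v) (r - 1) w).Finite := by
  apply Set.Finite.subset (d.proj_support_finite v)
  intro r hr
  simp only [Function.mem_support] at hr ⊢
  intro h0
  apply hr
  rw [h0, W.act_zero]
  rfl

lemma o_homog {s : ℤ} {v : V} (h : v ∈ d.grading s) (w : M) :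
    W.o v w = W.act v (s - 1) w := by
  unfold o
  rw [finsum_eq_single _ s]
  · rw [d.proj_of_mem h]
  · intro r hr
    rw [d.proj_of_mem_ne h hr, W.act_zero]
    rfl

lemma o_zero_left (w : M) : W.o 0 w = 0 := by
  unfold o
  rw [finsum_eq_zero_of_forall_eq_zero]
  intro r
  rw [map_zero, W.act_zero]
  rfl

lemma o_add_left (v₁ v₂ : V) (w : M) : W.o (v₁ + v₂) w = W.o v₁ w + W.o v₂ w := by
  unfold o
  rw [← finsum_add_distrib (W.o_support v₁ w) (W.o_support v₂ w)]
  exact finsum_congr fun r => by rw [map_add, W.act_add]; rfl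

lemma o_smul_left (c : ℂ) (v : V) (w : M) : W.o (c • v) w = c • W.o v w := by
  unfold o
  rw [smul_finsum]
  exact finsum_congr fun r => by rw [map_smul, W.act_smul]; rfl

lemma o_add_right (v : V) (w₁ w₂ : M) : W.o v (w₁ + w₂) = W.o v w₁ + W.o v w₂ := by
  unfold o
  rw [← finsum_add_distrib (W.o_support v w₁) (W.o_support v w₂)]
  exact finsum_congr fun r => by rw [map_add]

lemma o_smul_right (c : ℂ) (v : V) (w : M) : W.o v (c • w) = c • W.o v w := by
  unfold o
  rw [smul_finsum]
  exact finsum_congr fun r => by rw [map_smul]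

/-- `o (-) w` as an additive monoid hom. -/
noncomputable def oHom (w : M) : V →+ M :=
  AddMonoidHom.mk' (fun v => W.o v w) (fun a b => W.o_add_left a b w)

@[simp] lemma oHom_apply (w : M) (v : V) : W.oHom w v = W.o v w := rfl

lemma cbinom_zero_of_ne {i : ℕ} (h : i ≠ 0) : cbinom 0 i = 0 := by
  obtain ⟨k, rfl⟩ := Nat.exists_eq_succ_of_ne_zero h
  exact cbinom_zero_succ k

/-- Commutator formula. -/
lemma commutator (p q : ℤ) (u v : V) (w : M) :
    W.act u p (W.act v q w) = W.act v q (W.act u p w)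
      + ∑ᶠ i : ℕ, cbinom p i • W.act (d.mode u (i : ℤ) v) (p + q - i) w := by
  have h := W.borcherds p q 0 u v w
  have hL : (∑ᶠ i : ℕ, cbinom p i • W.act (d.mode u (0 + (i : ℤ)) v) (p + q - i) w)
      = ∑ᶠ i : ℕ, cbinom p i • W.act (d.mode u (i : ℤ) v) (p + q - i) w :=
    finsum_congr fun i => by rw [zero_add]
  rw [hL] at h
  have hR : (∑ᶠ i : ℕ, ((-1 : ℂ) ^ i * cbinom 0 i) •
      (W.act u (p + 0 - i) (W.act v (q + i) w)
        - (-1 : ℂ) ^ (0 : ℤ) • W.act v (q + 0 - i) (W.act u (p + i) w)))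
      = W.act u p (W.act v q w) - W.act v q (W.act u p w) := by
    rw [finsum_eq_single _ 0]
    · norm_num [cbinom_zero]
    · intro i hi
      rw [cbinom_zero_of_ne hi]
      simp
  rw [hR] at h
  rw [h]
  abel

/-- Iterate formula. -/
lemma iterate (q r : ℤ) (u v : V) (w : M) :
    W.act (d.mode u r v) q w
      = ∑ᶠ i : ℕ, ((-1 : ℂ) ^ i * cbinom r i) •
          (W.act u (r - i) (W.act v (q + i) w)
            - (-1 : ℂ) ^ r • W.act v (q + r - i) (W.act u (i : ℤ) w)) := by
  have h := W.borcherds 0 q r u v w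
  have hL : (∑ᶠ i : ℕ, cbinom 0 i • W.act (d.mode u (r + (i : ℤ)) v) (0 + q - i) w)
      = W.act (d.mode u r v) q w := by
    rw [finsum_eq_single _ 0]
    · norm_num [cbinom_zero]
    · intro i hi
      rw [cbinom_zero_of_ne hi]
      simp
  rw [hL] at h
  rw [h]
  exact finsum_congr fun i => by
    rw [show (0 : ℤ) + r - i = r - i by ring, show (0 : ℤ) + (i : ℤ) = (i : ℤ) by ring]

end WeakMod

end Aux3

section Aux4

namespace WeakMod

variable {d : VOA V} {M : Type} [AddCommGroup M] [Module ℂ M] (W : WeakMod d M)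

lemma cbinom_neg_two (i : ℕ) : cbinom (-2) i = (-1 : ℂ) ^ i * ((i : ℂ) + 1) := by
  have h := cbinom_neg 1 i
  norm_num at h
  rw [h]
  congr 1
  rw [add_comm 1 i, Nat.choose_succ_self_right]
  push_cast
  ring

lemma neg_one_zpow_neg_two : ((-1 : ℂ) ^ (-2 : ℤ)) = 1 := by
  rw [show (-2 : ℤ) = -(2 : ℤ) from rfl, zpow_neg]
  norm_num

lemma Lneg1_mod (u : V) (q : ℤ) (w : M) :
    W.act (d.mode d.conformal 0 u) q w = (-(q : ℂ)) • W.act u (q - 1) w := by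
  have hmode : d.mode d.conformal 0 u = d.mode u (-2) d.vacuum := by
    have h1 := d.Lneg1_deriv u (-1)
    have h2 := DFunLike.congr_fun h1 d.vacuum
    rw [d.creation_neg_one] at h2
    rw [h2]
    norm_num
  rw [hmode, W.iterate q (-2) u d.vacuum w]
  have hterm : ∀ i : ℕ, ((-1 : ℂ) ^ i * cbinom (-2) i) •
      (W.act u ((-2 : ℤ) - i) (W.act d.vacuum (q + i) w)
        - (-1 : ℂ) ^ (-2 : ℤ) • W.act d.vacuum (q + (-2) - i) (W.act u (i : ℤ) w))
      = ((i : ℂ) + 1) •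
      (W.act u ((-2 : ℤ) - i) (W.act d.vacuum (q + i) w)
        - W.act d.vacuum (q + (-2) - i) (W.act u (i : ℤ) w)) := by
    intro i
    rw [neg_one_zpow_neg_two, one_smul, cbinom_neg_two, ← mul_assoc, ← mul_pow]
    norm_num
  rw [finsum_congr hterm]
  rcases lt_trichotomy q 0 with hq | hq | hq
  · -- q < 0
    set i0 : ℕ := (-1 - q).toNat with hi0
    have hi0z : (i0 : ℤ) = -1 - q := by omega
    rw [finsum_eq_single _ i0]
    · rw [W.vacuum_act, W.vacuum_act, if_pos (show q + (i0 : ℤ) = -1 by omega),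
        if_neg (show ¬ q + (-2) - (i0 : ℤ) = -1 by omega), sub_zero,
        show (-2 : ℤ) - (i0 : ℤ) = q - 1 by omega]
      congr 1
      have hc : ((i0 : ℕ) : ℂ) = -1 - (q : ℂ) := by exact_mod_cast hi0z
      rw [hc]
      ring
    · intro i hi
      rw [W.vacuum_act, W.vacuum_act, if_neg (show ¬ q + (i : ℤ) = -1 by omega),
        if_neg (show ¬ q + (-2) - (i : ℤ) = -1 by omega)]
      simp
  · -- q = 0
    subst hq
    rw [finsum_eq_zero_of_forall_eq_zero]
    · simp
    intro i
    rw [W.vacuum_act, W.vacuum_act, if_neg (show ¬ (0 : ℤ) + (i : ℤ) = -1 by omega),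
      if_neg (show ¬ (0 : ℤ) + (-2) - (i : ℤ) = -1 by omega)]
    simp
  · -- q > 0
    set i0 : ℕ := (q - 1).toNat with hi0
    have hi0z : (i0 : ℤ) = q - 1 := by omega
    rw [finsum_eq_single _ i0]
    · rw [W.vacuum_act, W.vacuum_act, if_neg (show ¬ q + (i0 : ℤ) = -1 by omega),
        if_pos (show q + (-2) - (i0 : ℤ) = -1 by omega), map_zero, zero_sub, smul_neg,
        ← neg_smul, show ((i0 : ℕ) : ℤ) = q - 1 from hi0z]
      congr 1
      have hc : ((i0 : ℕ) : ℂ) = (q : ℂ) - 1 := by exact_mod_cast hi0z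
      rw [hc]
      ring
    · intro i hi
      rw [W.vacuum_act, W.vacuum_act, if_neg (show ¬ q + (i : ℤ) = -1 by omega),
        if_neg (show ¬ q + (-2) - (i : ℤ) = -1 by omega)]
      simp

end WeakMod

end Aux4

section Aux5

namespace WeakMod

variable {d : VOA V} {M : Type} [AddCommGroup M] [Module ℂ M] (W : WeakMod d M)

/-- Master lemma: `o` of `bres` on homogeneous vectors, as a Borcherds-type sum. -/
lemma o_bres_homog {s t : ℤ} {u v : V} (hu : u ∈ d.grading s) (hv : v ∈ d.grading t)
    (m k : ℤ) (w : M) :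
    W.o (d.bres m k u v) w
      = ∑ᶠ i : ℕ, cbinom (s + m) i •
          W.act (d.mode u ((i : ℤ) - k) v) (s + t + k - (i : ℤ) - 2) w := by
  rw [d.bres_homog hu m k v]
  have hmap := (W.oHom w).map_finsum (d.hres_support (s + m) k u v)
  simp only [oHom_apply] at hmap
  rw [hmap]
  refine finsum_congr fun i => ?_
  rw [W.o_smul_left]
  have hmem := d.grading_mode s t ((i : ℤ) - k) u v hu hv
  rw [W.o_homog hmem]
  rw [show s + t - ((i : ℤ) - k) - 1 - 1 = s + t + k - (i : ℤ) - 2 by ring]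

variable (n : ℕ)

/-- `Ω_n(M)` as a submodule. -/
noncomputable def OmegaSubmodule : Submodule ℂ M where
  carrier := W.OmegaSet n
  add_mem' := by
    intro a b ha hb r u hu m hm
    rw [map_add, ha r u hu m hm, hb r u hu m hm, add_zero]
  zero_mem' := by
    intro r u hu m hm
    rw [map_zero]
  smul_mem' := by
    intro c a ha r u hu m hm
    rw [map_smul, ha r u hu m hm, smul_zero]

@[simp] lemma mem_OmegaSubmodule {w : M} :
    w ∈ W.OmegaSubmodule n ↔ w ∈ W.OmegaSet n := Iff.rfl

lemma omega_stable {w : M} (hw : w ∈ W.OmegaSet n) (v : V) :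
    W.o v w ∈ W.OmegaSet n := by
  intro r u hu m hm
  unfold o
  have hmap := (W.act u m).toAddMonoidHom.map_finsum (W.o_support v w)
  simp only [LinearMap.toAddMonoidHom_coe] at hmap
  rw [hmap]
  rw [finsum_eq_zero_of_forall_eq_zero]
  intro r'
  rw [W.commutator m (r' - 1) u (d.proj r' v) w]
  rw [hw r u hu m hm, map_zero, zero_add]
  rw [finsum_eq_zero_of_forall_eq_zero]
  intro i
  have hmem := d.grading_mode r r' (i : ℤ) u (d.proj r' v) hu (d.proj_mem r' v)
  rw [hw _ _ hmem (m + (r' - 1) - i) (by omega), smul_zero]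

end WeakMod

end Aux5

set_option linter.unusedSectionVars false

section Aux6

namespace VOA

variable (d : VOA V)

lemma hres_zero_right (N k : ℤ) (u : V) : d.hres N k u 0 = 0 := by
  unfold hres
  rw [finsum_eq_zero_of_forall_eq_zero]
  intro i
  rw [map_zero, smul_zero]

lemma hres_add_right (N k : ℤ) (u v₁ v₂ : V) :
    d.hres N k u (v₁ + v₂) = d.hres N k u v₁ + d.hres N k u v₂ := by
  unfold hres
  rw [← finsum_add_distrib (d.hres_support N k u v₁) (d.hres_support N k u v₂)]
  exact finsum_congr fun i => by rw [map_add, smul_add]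

lemma bres_zero_right (m k : ℤ) (u : V) : d.bres m k u 0 = 0 := by
  unfold bres
  rw [finsum_eq_zero_of_forall_eq_zero]
  intro r
  rw [hres_zero_right]

lemma bres_add_right (m k : ℤ) (u v₁ v₂ : V) :
    d.bres m k u (v₁ + v₂) = d.bres m k u v₁ + d.bres m k u v₂ := by
  unfold bres
  rw [← finsum_add_distrib]
  · exact finsum_congr fun r => by rw [hres_add_right]
  all_goals {
    apply Set.Finite.subset (d.proj_support_finite u)
    intro r hr
    simp only [Function.mem_support] at hr ⊢
    intro h0
    exact hr (by rw [h0, hres_zero_left]) }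

/-- Reduction of a statement to homogeneous vectors. -/
lemma hom_reduce (f : V → M) [AddCommGroup M] [Module ℂ M]
    (hadd : ∀ a b : V, f (a + b) = f a + f b)
    (hhom : ∀ (r : ℤ) (x : V), x ∈ d.grading r → f x = 0) : ∀ u : V, f u = 0 := by
  intro u
  have h1 : f u = f (∑ᶠ r, d.proj r u) := by rw [d.finsum_proj]
  rw [h1]
  have hmap := (AddMonoidHom.mk' f hadd).map_finsum (d.proj_support_finite u)
  simp only [AddMonoidHom.mk'_apply] at hmap
  rw [hmap, finsum_eq_zero_of_forall_eq_zero]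
  intro r
  exact hhom r _ (d.proj_mem r u)

end VOA

namespace WeakMod

variable {d : VOA V} {M : Type} [AddCommGroup M] [Module ℂ M] (W : WeakMod d M) (n : ℕ)

lemma o_circn_zero_homog {s t : ℤ} {u v : V} (hu : u ∈ d.grading s) (hv : v ∈ d.grading t)
    {w : M} (hw : w ∈ W.OmegaSet n) : W.o (d.circn n u v) w = 0 := by
  unfold VOA.circn
  rw [W.o_bres_homog hu hv]
  have hcong : ∀ i : ℕ, cbinom (s + (n : ℤ)) i •
      W.act (d.mode u ((i : ℤ) - (2 * (n : ℤ) + 2)) v) (s + t + (2 * (n : ℤ) + 2) - (i : ℤ) - 2) w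
      = cbinom (s + (n : ℤ)) i •
      W.act (d.mode u ((-(2 * (n : ℤ) + 2)) + (i : ℤ)) v) ((s + n) + (t + n) - (i : ℤ)) w := by
    intro i
    rw [show (i : ℤ) - (2 * (n : ℤ) + 2) = (-(2 * (n : ℤ) + 2)) + (i : ℤ) by ring,
      show s + t + (2 * (n : ℤ) + 2) - (i : ℤ) - 2 = (s + n) + (t + n) - (i : ℤ) by ring]
  rw [finsum_congr hcong]
  rw [W.borcherds (s + n) (t + n) (-(2 * (n : ℤ) + 2)) u v w]
  rw [finsum_eq_zero_of_forall_eq_zero]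
  intro i
  rw [hw t v hv ((t + (n : ℤ)) + (i : ℤ)) (by omega), map_zero]
  rw [hw s u hu ((s + (n : ℤ)) + (i : ℤ)) (by omega), map_zero]
  simp

lemma o_Lsum_zero_homog {s : ℤ} {u : V} (hu : u ∈ d.grading s) (w : M) :
    W.o (d.mode d.conformal 0 u + d.mode d.conformal 1 u) w = 0 := by
  rw [W.o_add_left]
  have hmem : d.mode d.conformal 0 u ∈ d.grading (s + 1) := by
    have h := d.grading_mode 2 s 0 d.conformal u d.conformal_mem hu
    rw [show (2 : ℤ) + s - 0 - 1 = s + 1 by ring] at h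
    exact h
  rw [W.o_homog hmem, show s + 1 - 1 = s by ring, W.Lneg1_mod u s w]
  rw [d.L0_eigen s u hu, W.o_smul_left, W.o_homog hu]
  rw [← add_smul]
  norm_num

lemma o_circn_zero (u v : V) {w : M} (hw : w ∈ W.OmegaSet n) :
    W.o (d.circn n u v) w = 0 := by
  refine d.hom_reduce (fun u => W.o (d.circn n u v) w) ?_ ?_ u
  · intro a b
    show W.o (d.bres (↑n) (2 * ↑n + 2) (a + b) v) w = _
    rw [d.bres_add_left, W.o_add_left]
    rfl
  · intro r x hx
    refine d.hom_reduce (fun v => W.o (d.circn n x v) w) ?_ ?_ v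
    · intro a b
      show W.o (d.bres (↑n) (2 * ↑n + 2) x (a + b)) w = _
      rw [d.bres_add_right, W.o_add_left]
      rfl
    · intro r' y hy
      exact W.o_circn_zero_homog n hx hy hw

lemma o_Lsum_zero (u : V) (w : M) :
    W.o (d.mode d.conformal 0 u + d.mode d.conformal 1 u) w = 0 := by
  refine d.hom_reduce (fun u => W.o (d.mode d.conformal 0 u + d.mode d.conformal 1 u) w) ?_ ?_ u
  · intro a b
    rw [map_add, map_add, show ((d.mode d.conformal 0) a + (d.mode d.conformal 0) b)
        + ((d.mode d.conformal 1) a + (d.mode d.conformal 1) b)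
        = ((d.mode d.conformal 0) a + (d.mode d.conformal 1) a)
        + ((d.mode d.conformal 0) b + (d.mode d.conformal 1) b) by abel, W.o_add_left]
  · intro r x hx
    exact W.o_Lsum_zero_homog hx w

lemma kills_On {x : V} (hx : x ∈ d.On n) {w : M} (hw : w ∈ W.OmegaSet n) :
    W.o x w = 0 := by
  induction hx using Submodule.span_induction with
  | mem z hz =>
    rcases hz with hz | hz
    · obtain ⟨u, v, rfl⟩ := hz
      exact W.o_circn_zero n u v hw
    · obtain ⟨u, rfl⟩ := hz
      exact W.o_Lsum_zero u w
  | zero => exact W.o_zero_left w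
  | add a b _ _ ha hb => rw [W.o_add_left, ha, hb, add_zero]
  | smul c a _ ha => rw [W.o_smul_left, ha, smul_zero]

end WeakMod

end Aux6

section Aux7

lemma triangle_sum {A : Type*} [AddCommMonoid A] (N : ℕ) (g : ℕ → ℕ → A) :
    ∑ m ∈ Finset.range (N + 1), ∑ i ∈ Finset.range (N + 1 - m), g m i
      = ∑ j ∈ Finset.range (N + 1), ∑ m ∈ Finset.range (j + 1), g m (j - m) := by
  rw [Finset.sum_sigma', Finset.sum_sigma']
  refine Finset.sum_nbij' (i := fun p => ⟨p.1 + p.2, p.1⟩) (j := fun p => ⟨p.2, p.1 - p.2⟩)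
    ?_ ?_ ?_ ?_ ?_
  all_goals intro a ha
  all_goals obtain ⟨x, y⟩ := a
  all_goals dsimp only
  all_goals simp only [Finset.mem_sigma, Finset.mem_range] at ha ⊢
  · omega
  · omega
  · rw [Sigma.mk.inj_iff, Nat.add_sub_cancel_left]
    exact ⟨rfl, HEq.rfl⟩
  · rw [Sigma.mk.inj_iff]
    exact ⟨by omega, HEq.rfl⟩
  · rw [Nat.add_sub_cancel_left]

namespace WeakMod

variable {d : VOA V} {M : Type} [AddCommGroup M] [Module ℂ M] (W : WeakMod d M) (n : ℕ)

lemma o_bres_starterm {s t : ℤ} {u v : V} (hu : u ∈ d.grading s) (hv : v ∈ d.grading t)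
    {w : M} (hw : w ∈ W.OmegaSet n) {m : ℕ} (hm : m ≤ n) :
    W.o (d.bres (n : ℤ) ((n : ℤ) + (m : ℤ) + 1) u v) w
      = ∑ i ∈ Finset.range (n + 1 - m), (((n + m + i).choose i : ℕ) : ℂ) •
          W.act u (s - (m : ℤ) - 1 - (i : ℤ)) (W.act v (t + (m : ℤ) - 1 + (i : ℤ)) w) := by
  rw [W.o_bres_homog hu hv]
  have hc1 : ∀ i : ℕ, cbinom (s + (n : ℤ)) i •
      W.act (d.mode u ((i : ℤ) - ((n : ℤ) + (m : ℤ) + 1)) v)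
        (s + t + ((n : ℤ) + (m : ℤ) + 1) - (i : ℤ) - 2) w
      = cbinom (s + (n : ℤ)) i •
      W.act (d.mode u ((-((n : ℤ) + (m : ℤ) + 1)) + (i : ℤ)) v)
        ((s + (n : ℤ)) + (t + (m : ℤ) - 1) - (i : ℤ)) w := by
    intro i
    rw [show (i : ℤ) - ((n : ℤ) + (m : ℤ) + 1) = (-((n : ℤ) + (m : ℤ) + 1)) + (i : ℤ) by ring,
      show s + t + ((n : ℤ) + (m : ℤ) + 1) - (i : ℤ) - 2
        = (s + (n : ℤ)) + (t + (m : ℤ) - 1) - (i : ℤ) by ring]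
  rw [finsum_congr hc1, W.borcherds (s + n) (t + m - 1) (-((n : ℤ) + (m : ℤ) + 1)) u v w]
  have hc2 : ∀ i : ℕ, ((-1 : ℂ) ^ i * cbinom (-((n : ℤ) + (m : ℤ) + 1)) i) •
      (W.act u ((s + (n : ℤ)) + (-((n : ℤ) + (m : ℤ) + 1)) - i) (W.act v ((t + (m : ℤ) - 1) + i) w)
        - (-1 : ℂ) ^ (-((n : ℤ) + (m : ℤ) + 1)) •
          W.act v ((t + (m : ℤ) - 1) + (-((n : ℤ) + (m : ℤ) + 1)) - i) (W.act u ((s + (n : ℤ)) + i) w))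
      = (((n + m + i).choose i : ℕ) : ℂ) •
          W.act u (s - (m : ℤ) - 1 - (i : ℤ)) (W.act v (t + (m : ℤ) - 1 + (i : ℤ)) w) := by
    intro i
    rw [hw s u hu ((s + (n : ℤ)) + (i : ℤ)) (by omega), map_zero, smul_zero, sub_zero]
    rw [show (-((n : ℤ) + (m : ℤ) + 1)) = -(((n + m : ℕ) : ℤ)) - 1 by push_cast; ring]
    rw [cbinom_neg (n + m) i]
    rw [show (s + (n : ℤ)) + (-(((n + m : ℕ) : ℤ)) - 1) - (i : ℤ)
      = s - (m : ℤ) - 1 - (i : ℤ) by push_cast; ring]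
    rw [← mul_assoc, ← mul_pow]
    norm_num
  rw [finsum_congr hc2]
  apply finsum_eq_finset_sum_of_support_subset
  intro i hi
  simp only [Function.mem_support] at hi
  simp only [Finset.coe_range, Set.mem_Iio]
  by_contra hge
  push_neg at hge
  apply hi
  rw [hw t v hv (t + (m : ℤ) - 1 + (i : ℤ)) (by omega), map_zero, smul_zero]

lemma o_starn_homog {s t : ℤ} {u v : V} (hu : u ∈ d.grading s) (hv : v ∈ d.grading t)
    {w : M} (hw : w ∈ W.OmegaSet n) :
    W.o (d.starn n u v) w = W.act u (s - 1) (W.act v (t - 1) w) := by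
  unfold VOA.starn
  have hmap := map_sum (W.oHom w)
    (fun (m : ℕ) => ((-1 : ℂ) ^ m * cbinom ((m : ℤ) + (n : ℤ)) n) •
      d.bres (n : ℤ) ((n : ℤ) + (m : ℤ) + 1) u v) (Finset.range (n + 1))
  simp only [oHom_apply] at hmap
  rw [hmap]
  have hstep : ∀ m ∈ Finset.range (n + 1),
      W.o (((-1 : ℂ) ^ m * cbinom ((m : ℤ) + (n : ℤ)) n) •
        d.bres (n : ℤ) ((n : ℤ) + (m : ℤ) + 1) u v) w
      = ∑ i ∈ Finset.range (n + 1 - m),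
          ((-1 : ℂ) ^ m * (((m + n).choose n : ℕ) : ℂ) * (((n + m + i).choose i : ℕ) : ℂ)) •
          W.act u (s - (m : ℤ) - 1 - (i : ℤ)) (W.act v (t + (m : ℤ) - 1 + (i : ℤ)) w) := by
    intro m hm
    simp only [Finset.mem_range] at hm
    rw [W.o_smul_left, W.o_bres_starterm n hu hv hw (by omega), Finset.smul_sum]
    refine Finset.sum_congr rfl fun i _ => ?_
    rw [smul_smul, show (m : ℤ) + (n : ℤ) = ((m + n : ℕ) : ℤ) by push_cast; ring,
      cbinom_natCast, mul_assoc]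
  rw [Finset.sum_congr rfl hstep]
  rw [triangle_sum n (fun m i =>
      ((-1 : ℂ) ^ m * (((m + n).choose n : ℕ) : ℂ) * (((n + m + i).choose i : ℕ) : ℂ)) •
      W.act u (s - (m : ℤ) - 1 - (i : ℤ)) (W.act v (t + (m : ℤ) - 1 + (i : ℤ)) w))]
  have hinner : ∀ j ∈ Finset.range (n + 1),
      (∑ m ∈ Finset.range (j + 1),
        ((-1 : ℂ) ^ m * (((m + n).choose n : ℕ) : ℂ) * (((n + m + (j - m)).choose (j - m) : ℕ) : ℂ)) •
        W.act u (s - (m : ℤ) - 1 - ((j - m : ℕ) : ℤ)) (W.act v (t + (m : ℤ) - 1 + ((j - m : ℕ) : ℤ)) w))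
      = (∑ m ∈ Finset.range (j + 1),
          (-1 : ℂ) ^ m * (((n + m).choose m : ℕ) : ℂ) * (((n + j).choose (j - m) : ℕ) : ℂ)) •
        W.act u (s - 1 - (j : ℤ)) (W.act v (t - 1 + (j : ℤ)) w) := by
    intro j hj
    rw [Finset.sum_smul]
    refine Finset.sum_congr rfl fun m hm => ?_
    simp only [Finset.mem_range] at hm
    have hmj : m ≤ j := by omega
    rw [show ((j - m : ℕ) : ℤ) = (j : ℤ) - (m : ℤ) by omega]
    rw [show s - (m : ℤ) - 1 - ((j : ℤ) - (m : ℤ)) = s - 1 - (j : ℤ) by ring,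
      show t + (m : ℤ) - 1 + ((j : ℤ) - (m : ℤ)) = t - 1 + (j : ℤ) by ring]
    congr 2
    · rw [show m + n = n + m by ring, Nat.choose_symm_add]
    · rw [show n + m + (j - m) = n + j by omega]
  rw [Finset.sum_congr rfl hinner]
  rw [Finset.sum_eq_single 0]
  · norm_num
  · intro j hj hj0
    rw [key_vandermonde n j (by omega), zero_smul]
  · intro h
    simp at h

end WeakMod

end Aux7

section Aux8

namespace WeakMod

variable {d : VOA V} {M : Type} [AddCommGroup M] [Module ℂ M] (W : WeakMod d M) (n : ℕ)

lemma starn_add_left (u₁ u₂ v : V) :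
    d.starn n (u₁ + u₂) v = d.starn n u₁ v + d.starn n u₂ v := by
  unfold VOA.starn
  rw [← Finset.sum_add_distrib]
  exact Finset.sum_congr rfl fun m _ => by rw [d.bres_add_left, smul_add]

lemma starn_add_right (u v₁ v₂ : V) :
    d.starn n u (v₁ + v₂) = d.starn n u v₁ + d.starn n u v₂ := by
  unfold VOA.starn
  rw [← Finset.sum_add_distrib]
  exact Finset.sum_congr rfl fun m _ => by rw [d.bres_add_right, smul_add]

lemma o_starn (u v : V) {w : M} (hw : w ∈ W.OmegaSet n) :
    W.o (d.starn n u v) w = W.o u (W.o v w) := by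
  have key : ∀ u : V, W.o (d.starn n u v) w - W.o u (W.o v w) = 0 := by
    refine d.hom_reduce (fun u => W.o (d.starn n u v) w - W.o u (W.o v w)) ?_ ?_
    · intro a b
      rw [starn_add_left n a b v, W.o_add_left, W.o_add_left]
      abel
    · intro r x hx
      have key2 : ∀ v : V, W.o (d.starn n x v) w - W.o x (W.o v w) = 0 := by
        refine d.hom_reduce (fun v => W.o (d.starn n x v) w - W.o x (W.o v w)) ?_ ?_
        · intro a b
          rw [starn_add_right n x a b, W.o_add_left, W.o_add_left, W.o_add_right]
          abel
        · intro r' y hy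
          rw [W.o_starn_homog n hx hy hw, W.o_homog hy, W.o_homog hx, sub_self]
      exact key2 v
  have h := key u
  rwa [sub_eq_zero] at h

/-- `o v` as an endomorphism of `M`. -/
noncomputable def oEnd (v : V) : Module.End ℂ M where
  toFun := fun w => W.o v w
  map_add' := W.o_add_right v
  map_smul' := fun c w => W.o_smul_right c v w

@[simp] lemma oEnd_apply (v : V) (w : M) : W.oEnd v w = W.o v w := rfl

end WeakMod

end Aux8


/-- `Ω_n(M)` is a submodule of the weak module `M` and carries an
`A_n(V)`-module structure with `v + O_n(V)` acting by `o(v)`. -/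
theorem stmt10 {M : Type} [AddCommGroup M] [Module ℂ M] (d : VOA V)
    (W : WeakMod d M) (n : ℕ) :
    ∃ P : Submodule ℂ M, (P : Set M) = W.OmegaSet n ∧
      ∃ Z : RepOf (d.On n) (d.starn n) d.vacuum P,
        ∀ (v : V) (w : P), ((Z.rep v) w : M) = W.o v (w : M) := by
  refine ⟨W.OmegaSubmodule n, rfl, ?_⟩
  have hstab : ∀ v : V, ∀ w ∈ W.OmegaSubmodule n, W.oEnd v w ∈ W.OmegaSubmodule n := by
    intro v w hw
    exact W.omega_stable n hw v
  refine ⟨⟨{ toFun := fun v => (W.oEnd v).restrict (hstab v)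
             map_add' := ?_
             map_smul' := ?_ }, ?_, ?_, ?_⟩, ?_⟩
  · intro a b
    apply LinearMap.ext
    rintro ⟨w, hw⟩
    apply Subtype.ext
    show W.o (a + b) w = W.o a w + W.o b w
    exact W.o_add_left a b w
  · intro c a
    apply LinearMap.ext
    rintro ⟨w, hw⟩
    apply Subtype.ext
    show W.o (c • a) w = c • W.o a w
    exact W.o_smul_left c a w
  · -- kills
    intro v hv
    apply LinearMap.ext
    rintro ⟨w, hw⟩
    apply Subtype.ext
    show W.o v w = 0
    exact W.kills_On n hv hw
  · -- mul_compat
    intro u v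
    apply LinearMap.ext
    rintro ⟨w, hw⟩
    apply Subtype.ext
    show W.o (d.starn n u v) w = W.o u (W.o v w)
    exact W.o_starn n u v hw
  · -- one_compat
    apply LinearMap.ext
    rintro ⟨w, hw⟩
    apply Subtype.ext
    show W.o d.vacuum w = w
    rw [W.o_homog d.vacuum_mem, W.vacuum_act, if_pos (by norm_num)]
  · intro v w
    rfl
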